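/- Let k be a field and let C be the divided power coalgebra over k: the free k-module with basis (γ_n)_{n≥0}, comultiplication Δ(γ_n) = Σ_{i+j=n} γ_i ⊗ γ_j, and counit ε(γ_n) = δ_{n,0}. Define the k-linear map f : C ⊗ C → C ⊗ C by f(γ_i ⊗ γ_j) = γ_{i-1} ⊗ γ_j − γ_i ⊗ γ_{j-1}, with the convention γ_{-1} = 0. Then 0 → C →^{Δ} C ⊗ C →^{f} C ⊗ C → 0 is a short exact sequence of k-modules: Δ is injective, the kernel of f equals the image of Δ, and f is surjective. -/

import Mathlib

open scoped TensorProduct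

noncomputable section

/-- The underlying module of the divided power coalgebra over `k`: the free `k`-module with
basis `(γ_n)_{n ≥ 0}`, realized as finitely supported functions `ℕ →₀ k`
(so `γ_n = Finsupp.single n 1`). -/
abbrev DividedPowers' (k : Type*) [Field k] : Type _ := ℕ →₀ k

variable (k : Type*) [Field k]

/-- `γ_n = Finsupp.single n 1`, the `n`-th basis element of the divided power coalgebra. -/
def gamma (n : ℕ) : DividedPowers' k := Finsupp.single n 1

/-- The comultiplication of the divided power coalgebra:
`Δ(γ_n) = Σ_{i+j=n} γ_i ⊗ γ_j`. -/
def dpComul : DividedPowers' k →ₗ[k] (DividedPowers' k) ⊗[k] (DividedPowers' k) :=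
  Finsupp.lsum k fun n =>
    LinearMap.toSpanSingleton k _
      (∑ p ∈ Finset.HasAntidiagonal.antidiagonal n, gamma k p.1 ⊗ₜ[k] gamma k p.2)

/-- The counit of the divided power coalgebra: `ε(γ_n) = δ_{n,0}`, i.e. `ε(f) = f 0`. -/
def dpCounit : DividedPowers' k →ₗ[k] k := Finsupp.lapply 0

/-- The "shift down" map `γ_i ↦ γ_{i-1}` (with the convention `γ_{-1} = 0`). -/
def dpDown : DividedPowers' k →ₗ[k] DividedPowers' k :=
  Finsupp.lsum k fun n =>
    match n with
    | 0 => 0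
    | m + 1 => LinearMap.toSpanSingleton k _ (gamma k m)

/-- The map `f : C ⊗ C → C ⊗ C`, `f(γ_i ⊗ γ_j) = γ_{i-1} ⊗ γ_j − γ_i ⊗ γ_{j-1}`
(with `γ_{-1} = 0`). -/
def dpF : (DividedPowers' k) ⊗[k] (DividedPowers' k) →ₗ[k]
    (DividedPowers' k) ⊗[k] (DividedPowers' k) :=
  TensorProduct.map (dpDown k) (LinearMap.id (R := k) (M := DividedPowers' k)) +
    TensorProduct.map (LinearMap.id (R := k) (M := DividedPowers' k)) (-(dpDown k))

/-!
Under `C ⊗ C ≃ (ℕ × ℕ →₀ k)`, `Δ u` has coefficients `u (i + j)` and `f` acts on coefficient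
arrays by `c ↦ c (i + 1, j) - c (i, j + 1)`. Hence `ker f` consists of the arrays that are constant
along antidiagonals, which are exactly the coefficient arrays of `Δ u` with `u n = c (n, 0)`.
Surjectivity is a telescoping induction: `f (γ_{i+1} ⊗ γ_{j+1}) = γ_i ⊗ γ_{j+1} - γ_{i+1} ⊗ γ_j`.
-/

local notation "coeffs" => finsuppTensorFinsupp' k ℕ ℕ

theorem dpDown_apply (x : DividedPowers' k) (i : ℕ) : dpDown k x i = x (i + 1) := by
  induction x using Finsupp.induction_linear with
  | zero => rfl
  | add x y hx hy => simp only [map_add, Finsupp.add_apply, hx, hy]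
  | single n a => rcases n with _ | m <;> simp [dpDown, gamma, Finsupp.single_apply]

theorem dpDown_gamma_zero : dpDown k (gamma k 0) = 0 := by
  ext i
  simp [dpDown_apply, gamma]

theorem dpDown_gamma_succ (m : ℕ) : dpDown k (gamma k (m + 1)) = gamma k m := by
  ext i
  simp [dpDown_apply, gamma, Finsupp.single_apply]

theorem dpF_tmul (x y : DividedPowers' k) :
    dpF k (x ⊗ₜ y) = dpDown k x ⊗ₜ y - x ⊗ₜ dpDown k y := by
  simp [dpF, sub_eq_add_neg, TensorProduct.tmul_neg]

theorem coeffs_dpF_apply (t : DividedPowers' k ⊗[k] DividedPowers' k) (i j : ℕ) :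
    coeffs (dpF k t) (i, j) = coeffs t (i + 1, j) - coeffs t (i, j + 1) := by
  induction t using TensorProduct.induction_on with
  | zero => simp
  | add t s ht hs => simp only [map_add, Finsupp.add_apply, ht, hs]; ring
  | tmul x y => simp [dpF_tmul, finsuppTensorFinsupp'_apply_apply, dpDown_apply]

theorem coeffs_dpComul_apply (u : DividedPowers' k) (i j : ℕ) :
    coeffs (dpComul k u) (i, j) = u (i + j) := by
  induction u using Finsupp.induction_linear with
  | zero => simp
  | add u v hu hv => simp only [map_add, Finsupp.add_apply, hu, hv]
  | single n a => simp [dpComul, gamma, map_sum, Finsupp.single_apply, eq_comm]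

theorem dpComul_injective : Function.Injective (dpComul k) := by
  intro u v huv
  ext n
  simpa [coeffs_dpComul_apply] using congr($(congrArg coeffs huv) (n, 0))

theorem range_dpComul_le_ker_dpF : LinearMap.range (dpComul k) ≤ LinearMap.ker (dpF k) := by
  rintro _ ⟨u, rfl⟩
  refine (map_eq_zero_iff coeffs (coeffs).injective).mp (Finsupp.ext fun ⟨i, j⟩ => ?_)
  rw [coeffs_dpF_apply, coeffs_dpComul_apply, coeffs_dpComul_apply, add_right_comm, add_assoc,
    sub_self, Finsupp.zero_apply]

theorem apply_eq_apply_add_zero_of_succ_fst_eq_succ_snd {α : Type*} {c : ℕ × ℕ → α}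
    (hc : ∀ i j, c (i + 1, j) = c (i, j + 1)) (i j : ℕ) : c (i, j) = c (i + j, 0) := by
  induction j generalizing i with
  | zero => rfl
  | succ j ih => rw [← hc, ih, add_right_comm, add_assoc]

theorem ker_dpF_le_range_dpComul : LinearMap.ker (dpF k) ≤ LinearMap.range (dpComul k) := by
  intro t ht
  have hc (i j : ℕ) : coeffs t (i + 1, j) = coeffs t (i, j + 1) := by
    rw [← sub_eq_zero, ← coeffs_dpF_apply, LinearMap.mem_ker.mp ht, map_zero,
      Finsupp.zero_apply]
  refine ⟨(coeffs t).comapDomain (·, 0) (Prod.mk_left_injective 0).injOn,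
    (coeffs).injective (Finsupp.ext fun ⟨i, j⟩ => ?_)⟩
  rw [coeffs_dpComul_apply, Finsupp.comapDomain_apply]
  exact (apply_eq_apply_add_zero_of_succ_fst_eq_succ_snd hc i j).symm

theorem gamma_tmul_gamma_mem_range_dpF (i j : ℕ) :
    gamma k i ⊗ₜ gamma k j ∈ LinearMap.range (dpF k) := by
  induction j generalizing i with
  | zero =>
    exact ⟨gamma k (i + 1) ⊗ₜ gamma k 0, by simp [dpF_tmul, dpDown_gamma_succ, dpDown_gamma_zero]⟩
  | succ j ih =>
    have h := dpF_tmul k (gamma k (i + 1)) (gamma k (j + 1))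
    rw [dpDown_gamma_succ, dpDown_gamma_succ, eq_sub_iff_add_eq] at h
    rw [← h]
    exact add_mem (LinearMap.mem_range_self _ _) (ih (i + 1))

theorem dpF_surjective : Function.Surjective (dpF k) := by
  let e := Finsupp.basisSingleOne (R := k) (ι := ℕ)
  let b := e.tensorProduct e
  rw [← LinearMap.range_eq_top, eq_top_iff, ← b.span_eq, Submodule.span_le]
  rintro _ ⟨⟨i, j⟩, rfl⟩
  simpa [b, e, gamma] using gamma_tmul_gamma_mem_range_dpF k i j

/-- For the divided power coalgebra `C` over a field `k`, the sequence
`0 → C →^Δ C ⊗ C →^f C ⊗ C → 0` is a short exact sequence of `k`-modules: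
`Δ` is injective, `ker f = range Δ`, and `f` is surjective. -/
theorem dividedPowers_shortExact :
    Function.Injective (dpComul k) ∧
      LinearMap.ker (dpF k) = LinearMap.range (dpComul k) ∧
      Function.Surjective (dpF k) :=
  ⟨dpComul_injective k, (ker_dpF_le_range_dpComul k).antisymm (range_dpComul_le_ker_dpF k),
    dpF_surjective k⟩

end
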